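/- arXiv:2404.03672 — 3 statements merged into one kernel-verified Lean document; each statement's English description precedes it below -/
import Mathlib

section
/- For all x ∈ ℝ, (x/2)(F(x) - 1) + F'(x) > 0. -/
noncomputable def F (ξ : ℝ) : ℝ :=
  (1 / Real.sqrt Real.pi) * ∫ s in (0:ℝ)..ξ, Real.exp (-s ^ 2 / 4)

noncomputable def F' (x : ℝ) : ℝ := (1 / Real.sqrt Real.pi) * Real.exp (-x ^ 2 / 4)

/-!
Since `1 - F x = (1/√π) ∫ₓ^∞ e^{-s²/4} ds`, the claim says `x ∫ₓ^∞ e^{-s²/4} ds < 2 e^{-x²/4}`.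
The right-hand side is `∫ₓ^∞ s e^{-s²/4} ds`, and `x < s` on the domain of integration.
-/

open Real MeasureTheory Set Filter

section GaussianTail

variable {b : ℝ}

theorem integral_Ioi_mul_exp_neg_mul_sq (hb : 0 < b) (x : ℝ) :
    ∫ s in Ioi x, s * exp (-b * s ^ 2) = exp (-b * x ^ 2) / (2 * b) := by
  have hderiv : ∀ s ∈ Ici x,
      HasDerivAt (fun s ↦ -exp (-b * s ^ 2) / (2 * b)) (s * exp (-b * s ^ 2)) s := by
    intro s _
    refine (((hasDerivAt_pow 2 s).const_mul (-b)).exp.neg.div_const (2 * b)).congr_deriv ?_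
    field_simp
    ring
  have hlim : Tendsto (fun s ↦ -exp (-b * s ^ 2) / (2 * b)) atTop (nhds 0) := by
    have hexp : Tendsto (fun s : ℝ ↦ exp (-b * s ^ 2)) atTop (nhds 0) := by
      refine tendsto_exp_atBot.comp ?_
      simp only [neg_mul]
      exact tendsto_neg_atTop_atBot.comp ((tendsto_pow_atTop two_ne_zero).const_mul_atTop hb)
    simpa using hexp.neg.div_const (2 * b)
  rw [integral_Ioi_of_hasDerivAt_of_tendsto' hderiv
    (integrable_mul_exp_neg_mul_sq hb).integrableOn hlim]
  ring

theorem mul_integral_Ioi_exp_neg_mul_sq_lt (hb : 0 < b) (x : ℝ) :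
    2 * b * x * ∫ s in Ioi x, exp (-b * s ^ 2) < exp (-b * x ^ 2) := by
  have hint : IntegrableOn (fun s ↦ exp (-b * s ^ 2)) (Ioi x) :=
    (integrable_exp_neg_mul_sq hb).integrableOn
  have hint' : IntegrableOn (fun s ↦ s * exp (-b * s ^ 2)) (Ioi x) :=
    (integrable_mul_exp_neg_mul_sq hb).integrableOn
  have hpos : 0 < ∫ s in Ioi x, (s - x) * exp (-b * s ^ 2) := by
    have hsupp : Function.support (fun s ↦ (s - x) * exp (-b * s ^ 2)) ∩ Ioi x = Ioi x :=
      inter_eq_right.2 fun s hs ↦ (mul_pos (sub_pos.2 hs) (exp_pos _)).ne'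
    have hint_diff : IntegrableOn (fun s ↦ (s - x) * exp (-b * s ^ 2)) (Ioi x) :=
      (hint'.sub (hint.const_mul x)).congr_fun (fun s _ ↦ (sub_mul _ _ _).symm) measurableSet_Ioi
    rw [setIntegral_pos_iff_support_of_nonneg_ae _ hint_diff, hsupp, volume_Ioi]
    · exact ENNReal.zero_lt_top
    · filter_upwards [ae_restrict_mem measurableSet_Ioi] with s hs
      exact mul_nonneg (sub_nonneg.2 hs.le) (exp_pos _).le
  simp only [sub_mul] at hpos
  rw [integral_sub hint' (hint.const_mul x), integral_const_mul,
    integral_Ioi_mul_exp_neg_mul_sq hb] at hpos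
  have h2b : 0 < 2 * b := by positivity
  calc 2 * b * x * ∫ s in Ioi x, exp (-b * s ^ 2)
      < 2 * b * (exp (-b * x ^ 2) / (2 * b)) := by
        rw [mul_assoc]; exact mul_lt_mul_of_pos_left (by linarith) h2b
    _ = exp (-b * x ^ 2) := by field_simp

end GaussianTail

lemma exp_neg_sq_div_four (s : ℝ) : exp (-s ^ 2 / 4) = exp (-(1 / 4) * s ^ 2) := by
  ring_nf

lemma one_sub_F_eq_integral_Ioi (x : ℝ) :
    1 - F x = 1 / √π * ∫ s in Ioi x, exp (-s ^ 2 / 4) := by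
  have hint : Integrable (fun s : ℝ ↦ exp (-s ^ 2 / 4)) := by
    simpa only [exp_neg_sq_div_four] using integrable_exp_neg_mul_sq (b := 1 / 4) (by norm_num)
  have hhalf : ∫ s in Ioi (0 : ℝ), exp (-s ^ 2 / 4) = √π := by
    simp only [exp_neg_sq_div_four, integral_gaussian_Ioi, one_div, div_inv_eq_mul]
    rw [sqrt_mul' _ (by norm_num), show (4 : ℝ) = 2 ^ 2 by norm_num, sqrt_sq zero_le_two]
    ring
  have hsplit := intervalIntegral.integral_interval_add_Ioi (a := 0) (b := x)
    hint.integrableOn hint.integrableOn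
  rw [hhalf] at hsplit
  have hπ : 0 < √π := sqrt_pos.2 pi_pos
  rw [F, show ∫ s in (0 : ℝ)..x, exp (-s ^ 2 / 4) = √π - ∫ s in Ioi x, exp (-s ^ 2 / 4) by
    linarith]
  field_simp
  ring

theorem pos_combination' (x : ℝ) : 0 < x / 2 * (F x - 1) + F' x := by
  have htail := mul_integral_Ioi_exp_neg_mul_sq_lt (b := 1 / 4) (by norm_num) x
  simp only [← exp_neg_sq_div_four] at htail
  have hF : F x - 1 = -(1 / √π * ∫ s in Ioi x, exp (-s ^ 2 / 4)) := by
    rw [← one_sub_F_eq_integral_Ioi]; ring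
  calc 0 < 1 / √π * (exp (-x ^ 2 / 4) - 2 * (1 / 4) * x * ∫ s in Ioi x, exp (-s ^ 2 / 4)) :=
        mul_pos (by positivity) (sub_pos.2 htail)
    _ = x / 2 * (F x - 1) + F' x := by rw [hF, F']; ring
end

section
/- The function P(x, y) = -ln(F(x) - F(y)) is strictly convex on the open half-plane {(x, y) ∈ ℝ² : x > y}; equivalently, its Hessian matrix D²P(x, y) is positive definite at every point with x > y. -/
/-!
Restrict to a segment t ↦ (α t, β t) with direction (u, v) and put g = Φ ∘ α - Φ ∘ β, where
Φ = F has the Gaussian density ρ = F'. Then -log g is strictly convex as soon as g g'' < g'², i.e.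
as soon as the quadratic form in (u, v)
  (u ρ x - v ρ y)² - (Φ x - Φ y) (u² ρ' x - v² ρ' y)
is positive definite whenever y < x. Writing ρ' = ψ ρ, its determinant is ρ x ρ y (Φ x - Φ y) times
  ψ y ρ x - ψ x ρ y - ψ x ψ y (Φ x - Φ y),
which is positive once ψ is strictly decreasing (ρ strictly log-concave; ψ s = -s/2 here): indeed
ρ x - ρ y = ∫ ψ ρ lies between ψ x (Φ x - Φ y) and ψ y (Φ x - Φ y).
-/

open Real Set Filter Topology AffineMap

lemma quadratic_pos_of_sq_lt_mul {A B m u v : ℝ} (hA : 0 < A) (hdet : m ^ 2 < A * B)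
    (huv : u ≠ 0 ∨ v ≠ 0) : 0 < A * u ^ 2 - 2 * m * u * v + B * v ^ 2 := by
  have key : A * (A * u ^ 2 - 2 * m * u * v + B * v ^ 2) =
      (A * u - m * v) ^ 2 + (A * B - m ^ 2) * v ^ 2 := by
    ring
  rcases eq_or_ne v 0 with rfl | hv
  · have hu : u ≠ 0 := huv.resolve_right (not_not.2 rfl)
    have : 0 < A * u ^ 2 := by positivity
    linarith
  · refine pos_of_mul_pos_right ?_ hA.le
    have : 0 < (A * B - m ^ 2) * v ^ 2 := mul_pos (by linarith) (by positivity)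
    rw [key]
    positivity

lemma strictConvexOn_of_lineMap {E : Type*} [AddCommGroup E] [Module ℝ E] {s : Set E}
    {f : E → ℝ} (hs : Convex ℝ s)
    (h : ∀ x ∈ s, ∀ y ∈ s, x ≠ y →
      StrictConvexOn ℝ ((lineMap x y : ℝ →ᵃ[ℝ] E) ⁻¹' s) (f ∘ (lineMap x y : ℝ →ᵃ[ℝ] E))) :
    StrictConvexOn ℝ s f := by
  refine ⟨hs, fun x hx y hy hxy a b ha hb hab => ?_⟩
  have := (h x hx y hy hxy).2 (x := 0) (y := 1) (by simpa) (by simpa) zero_ne_one ha hb hab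
  obtain rfl : a = 1 - b := eq_sub_of_add_eq hab
  simpa [lineMap_apply_module] using this

lemma strictConvexOn_neg_log_of_mul_lt_sq {s : Set ℝ} (hs : Convex ℝ s) (hso : IsOpen s)
    {g g' g'' : ℝ → ℝ} (hg : ∀ t ∈ s, HasDerivAt g (g' t) t)
    (hg' : ∀ t ∈ s, HasDerivAt g' (g'' t) t) (hpos : ∀ t ∈ s, 0 < g t)
    (hlt : ∀ t ∈ s, g t * g'' t < g' t ^ 2) :
    StrictConvexOn ℝ s (fun t => -log (g t)) := by
  refine strictConvexOn_of_deriv2_pos' hs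
    (fun t ht => ((hg t ht).continuousAt.log (hpos t ht).ne').neg.continuousWithinAt)
    fun t ht => ?_
  have hderiv : deriv (fun t => -log (g t)) =ᶠ[𝓝 t] fun t => -(g' t / g t) := by
    filter_upwards [hso.mem_nhds ht] with r hr
    exact ((hg r hr).log (hpos r hr).ne').neg.deriv
  have hderiv2 : HasDerivAt (fun t => -(g' t / g t)) _ t :=
    ((hg' t ht).div (hg t ht) (hpos t ht).ne').neg
  rw [Function.iterate_succ_apply', Function.iterate_one, hderiv.deriv_eq, hderiv2.deriv]
  exact neg_pos.2 (div_neg_of_neg_of_pos (by linarith [hlt t ht]) (pow_pos (hpos t ht) 2))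

section LogConcaveDensity

variable {Φ ρ ψ : ℝ → ℝ}

lemma mul_sub_le_sub_of_antitone (hΦ : ∀ s, HasDerivAt Φ (ρ s) s)
    (hρ : ∀ s, HasDerivAt ρ (ψ s * ρ s) s) (hρ_pos : ∀ s, 0 < ρ s) (hψ : Antitone ψ)
    {x y : ℝ} (hxy : y ≤ x) : ψ x * (Φ x - Φ y) ≤ ρ x - ρ y := by
  have hmono : MonotoneOn (fun t => ρ t - ψ x * Φ t) (Iic x) := by
    refine monotoneOn_of_hasDerivWithinAt_nonneg (convex_Iic x)
      (f' := fun t => ψ t * ρ t - ψ x * ρ t) ?_ (fun t _ => ?_) fun t ht => ?_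
    · exact fun t _ => ((hρ t).sub ((hΦ t).const_mul _)).continuousAt.continuousWithinAt
    · exact ((hρ t).sub ((hΦ t).const_mul _)).hasDerivWithinAt
    · rw [interior_Iic] at ht
      have := hψ (le_of_lt ht)
      nlinarith [hρ_pos t]
  have := hmono hxy self_mem_Iic hxy
  linarith

lemma sub_le_mul_sub_of_antitone (hΦ : ∀ s, HasDerivAt Φ (ρ s) s)
    (hρ : ∀ s, HasDerivAt ρ (ψ s * ρ s) s) (hρ_pos : ∀ s, 0 < ρ s) (hψ : Antitone ψ)
    {x y : ℝ} (hxy : y ≤ x) : ρ x - ρ y ≤ ψ y * (Φ x - Φ y) := by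
  have hanti : AntitoneOn (fun t => ρ t - ψ y * Φ t) (Ici y) := by
    refine antitoneOn_of_hasDerivWithinAt_nonpos (convex_Ici y)
      (f' := fun t => ψ t * ρ t - ψ y * ρ t) ?_ (fun t _ => ?_) fun t ht => ?_
    · exact fun t _ => ((hρ t).sub ((hΦ t).const_mul _)).continuousAt.continuousWithinAt
    · exact ((hρ t).sub ((hΦ t).const_mul _)).hasDerivWithinAt
    · rw [interior_Ici] at ht
      have := hψ (le_of_lt ht)
      nlinarith [hρ_pos t]
  have := hanti self_mem_Ici hxy hxy
  linarith

lemma sub_mul_lt_sq_of_strictAnti (hΦ : ∀ s, HasDerivAt Φ (ρ s) s)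
    (hρ : ∀ s, HasDerivAt ρ (ψ s * ρ s) s) (hρ_pos : ∀ s, 0 < ρ s) (hψ : StrictAnti ψ)
    {x y : ℝ} (hxy : y < x) {u v : ℝ} (huv : u ≠ 0 ∨ v ≠ 0) :
    (Φ x - Φ y) * (u ^ 2 * (ψ x * ρ x) - v ^ 2 * (ψ y * ρ y)) < (u * ρ x - v * ρ y) ^ 2 := by
  set I := Φ x - Φ y
  have hI : 0 < I := sub_pos.2 (strictMono_of_hasDerivAt_pos hΦ hρ_pos hxy)
  have hlow := mul_sub_le_sub_of_antitone hΦ hρ hρ_pos hψ.antitone hxy.le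
  have hupp := sub_le_mul_sub_of_antitone hΦ hρ hρ_pos hψ.antitone hxy.le
  have hψxy := hψ hxy
  have hρx := hρ_pos x
  have hρy := hρ_pos y
  have hA : 0 < ρ x * (ρ x - ψ x * I) := mul_pos hρx (by linarith)
  have hE : 0 < ψ y * ρ x - ψ x * ρ y - ψ x * ψ y * I := by
    rcases le_or_gt 0 (ψ y) with hy | hy
    · nlinarith [mul_nonneg hy (sub_nonneg.2 hlow)]
    · nlinarith [mul_nonneg (by linarith : 0 ≤ -ψ x) (sub_nonneg.2 hupp)]
  have hdet : (ρ x * ρ y) ^ 2 < ρ x * (ρ x - ψ x * I) * (ρ y * (ρ y + ψ y * I)) := by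
    have := mul_pos (mul_pos (mul_pos hρx hρy) hI) hE
    linear_combination this
  have := quadratic_pos_of_sq_lt_mul hA hdet huv
  linear_combination this

theorem strictConvexOn_neg_log_sub (hΦ : ∀ s, HasDerivAt Φ (ρ s) s)
    (hρ : ∀ s, HasDerivAt ρ (ψ s * ρ s) s) (hρ_pos : ∀ s, 0 < ρ s) (hψ : StrictAnti ψ) :
    StrictConvexOn ℝ {p : ℝ × ℝ | p.2 < p.1} (fun p => -log (Φ p.1 - Φ p.2)) := by
  set H := {p : ℝ × ℝ | p.2 < p.1}
  have hH : Convex ℝ H := by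
    simpa only [LinearMap.sub_apply, LinearMap.coe_fst, LinearMap.coe_snd, sub_neg] using
      convex_halfSpace_lt (LinearMap.snd ℝ ℝ ℝ - LinearMap.fst ℝ ℝ ℝ).isLinear 0
  have hHo : IsOpen H := isOpen_lt continuous_snd continuous_fst
  refine strictConvexOn_of_lineMap hH fun p _ q _ hpq => ?_
  set u := q.1 - p.1
  set v := q.2 - p.2
  have huv : u ≠ 0 ∨ v ≠ 0 := by
    by_contra! h
    exact hpq (Prod.ext (by linarith [h.1]) (by linarith [h.2]))
  set α : ℝ →ᵃ[ℝ] ℝ := lineMap p.1 q.1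
  set β : ℝ →ᵃ[ℝ] ℝ := lineMap p.2 q.2
  have hα : ∀ t, HasDerivAt α u t := fun t => hasDerivAt_lineMap
  have hβ : ∀ t, HasDerivAt β v t := fun t => hasDerivAt_lineMap
  have hcomp : (fun p : ℝ × ℝ => -log (Φ p.1 - Φ p.2)) ∘ lineMap p q =
      fun t => -log (Φ (α t) - Φ (β t)) := by
    ext t; simp only [Function.comp_apply, fst_lineMap, snd_lineMap, α, β]
  have hαβ : ∀ t ∈ lineMap p q ⁻¹' H, β t < α t := fun t ht => by
    simpa only [mem_preimage, H, mem_ofPred_eq, fst_lineMap, snd_lineMap] using ht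
  rw [hcomp]
  refine strictConvexOn_neg_log_of_mul_lt_sq (hH.affine_preimage _)
    (hHo.preimage lineMap_continuous)
    (fun t _ => ((hΦ _).comp t (hα t)).sub ((hΦ _).comp t (hβ t)))
    (fun t _ => (((hρ _).comp t (hα t)).mul_const u).sub (((hρ _).comp t (hβ t)).mul_const v))
    (fun t ht => ?_) fun t ht => ?_
  · exact sub_pos.2 (strictMono_of_hasDerivAt_pos hΦ hρ_pos (hαβ t ht))
  · have := sub_mul_lt_sq_of_strictAnti hΦ hρ hρ_pos hψ (hαβ t ht) huv
    linear_combination this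

end LogConcaveDensity

lemma hasDerivAt_F (ξ : ℝ) : HasDerivAt F (1 / √π * exp (-ξ ^ 2 / 4)) ξ :=
  ((Continuous.integral_hasStrictDerivAt (by fun_prop) 0 ξ).hasDerivAt).const_mul _

lemma hasDerivAt_gaussian (ξ : ℝ) :
    HasDerivAt (fun s => 1 / √π * exp (-s ^ 2 / 4)) (-(ξ / 2) * (1 / √π * exp (-ξ ^ 2 / 4))) ξ :=
  (((hasDerivAt_pow 2 ξ).neg.div_const 4).exp.const_mul _).congr_deriv <| by
    simp only [Pi.neg_apply]; ring

theorem strictConvexOn_P :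
    StrictConvexOn ℝ {p : ℝ × ℝ | p.2 < p.1}
      (fun p : ℝ × ℝ => -Real.log (F p.1 - F p.2)) :=
  strictConvexOn_neg_log_sub hasDerivAt_F hasDerivAt_gaussian (fun _ => by positivity)
    fun _ _ h => by linarith
end

section
/- The matrix Q = (F(x) - F(y))² · D²P(x, y), where P(x,y) = -ln(F(x) - F(y)), decomposes as Q = R₁ + F'(x)F'(y)R₂, where R₁ is the diagonal matrix with diagonal entries F'(x)(F(x)-F(y))(x-z)/2 and F'(y)(F(x)-F(y))(z-y)/2 for some z ∈ (y,x), and R₂ is the matrix [[1,-1],[-1,1]]. -/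
/-- `P x y = -ln (F x - F y)`. -/
noncomputable def P (x y : ℝ) : ℝ := -Real.log (F x - F y)

/-- The rescaled Hessian matrix `Q = (F x - F y)^2 • D²P(x,y)`. -/
noncomputable def Q (x y : ℝ) : Matrix (Fin 2) (Fin 2) ℝ :=
  (F x - F y) ^ 2 •
    !![deriv (fun s => deriv (fun t => P t y) s) x,
       deriv (fun s => deriv (fun t => P t s) x) y;
       deriv (fun s => deriv (fun t => P t s) x) y,
       deriv (fun s => deriv (fun t => P x t) s) y]

/-!
Differentiating `P` twice expresses `Q` through `F`, `F'` and `F'' ξ = -(ξ / 2) F' ξ` alone.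
Cauchy's mean value theorem for `F'` against `F` gives `F' x - F' y = -(z / 2) (F x - F y)`,
and substituting this into the diagonal entries of `Q` splits off `F' x F' y` times `!![1, -1; -1, 1]`.
-/

open Real Filter Topology

section NegLogSub

variable {f f' : ℝ → ℝ} {x y a : ℝ}

theorem deriv_deriv_neg_log_sub_left (hf : ∀ t, HasDerivAt f (f' t) t)
    (hf' : HasDerivAt f' a x) (hxy : f y < f x) :
    deriv (fun s => deriv (fun t => -log (f t - f y)) s) x
      = (f' x ^ 2 - a * (f x - f y)) / (f x - f y) ^ 2 := by
  have hnear : ∀ᶠ s in 𝓝 x, f y < f s :=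
    continuousAt_const.eventually_lt (hf x).continuousAt hxy
  have hfirst : (fun s => deriv (fun t => -log (f t - f y)) s)
      =ᶠ[𝓝 x] fun s => -(f' s / (f s - f y)) := by
    filter_upwards [hnear] with s hs
    exact (((hf s).sub_const _).log (sub_pos.2 hs).ne').neg.deriv
  have hsecond : HasDerivAt (fun s => -(f' s / (f s - f y)))
      (-((a * (f x - f y) - f' x * f' x) / (f x - f y) ^ 2)) x :=
    (hf'.div ((hf x).sub_const _) (sub_pos.2 hxy).ne').neg
  rw [hfirst.deriv_eq, hsecond.deriv]
  field_simp
  ring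

theorem deriv_deriv_neg_log_sub_mixed (hf : ∀ t, HasDerivAt f (f' t) t) (hxy : f y < f x) :
    deriv (fun s => deriv (fun t => -log (f t - f s)) x) y
      = -(f' x * f' y) / (f x - f y) ^ 2 := by
  have hnear : ∀ᶠ s in 𝓝 y, f s < f x :=
    (hf y).continuousAt.eventually_lt continuousAt_const hxy
  have hfirst : (fun s => deriv (fun t => -log (f t - f s)) x)
      =ᶠ[𝓝 y] fun s => -(f' x / (f x - f s)) := by
    filter_upwards [hnear] with s hs
    exact (((hf x).sub_const _).log (sub_pos.2 hs).ne').neg.deriv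
  have hsecond : HasDerivAt (fun s => -(f' x / (f x - f s)))
      (-((0 * (f x - f y) - f' x * (0 - f' y)) / (f x - f y) ^ 2)) y :=
    ((hasDerivAt_const y (f' x)).div ((hasDerivAt_const y (f x)).sub (hf y))
      (sub_pos.2 hxy).ne').neg
  rw [hfirst.deriv_eq, hsecond.deriv]
  field_simp
  ring

theorem deriv_deriv_neg_log_sub_right (hf : ∀ t, HasDerivAt f (f' t) t)
    (hf' : HasDerivAt f' a y) (hxy : f y < f x) :
    deriv (fun s => deriv (fun t => -log (f x - f t)) s) y
      = (f' y ^ 2 + a * (f x - f y)) / (f x - f y) ^ 2 := by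
  have hnear : ∀ᶠ s in 𝓝 y, f s < f x :=
    (hf y).continuousAt.eventually_lt continuousAt_const hxy
  have hfirst : (fun s => deriv (fun t => -log (f x - f t)) s)
      =ᶠ[𝓝 y] fun s => -((0 - f' s) / (f x - f s)) := by
    filter_upwards [hnear] with s hs
    exact (((hasDerivAt_const s (f x)).sub (hf s)).log (sub_pos.2 hs).ne').neg.deriv
  have hsecond : HasDerivAt (fun s => -((0 - f' s) / (f x - f s)))
      (-(((0 - a) * (f x - f y) - (0 - f' y) * (0 - f' y)) / (f x - f y) ^ 2)) y :=
    (((hasDerivAt_const y 0).sub hf').div ((hasDerivAt_const y (f x)).sub (hf y))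
      (sub_pos.2 hxy).ne').neg
  rw [hfirst.deriv_eq, hsecond.deriv]
  field_simp
  ring

end NegLogSub

theorem F'_pos (x : ℝ) : 0 < F' x := by
  unfold F'
  positivity

theorem hasDerivAt_F_s7 (x : ℝ) : HasDerivAt F (F' x) x := by
  have hc : Continuous fun s : ℝ => exp (-s ^ 2 / 4) := by fun_prop
  unfold F F'
  simpa [mul_comm] using (hc.integral_hasStrictDerivAt 0 x).hasDerivAt.const_mul (1 / √π)

theorem hasDerivAt_F' (x : ℝ) : HasDerivAt F' (-x / 2 * F' x) x := by
  have hexp : HasDerivAt (fun t : ℝ => -t ^ 2 / 4) (-x / 2) x :=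
    ((hasDerivAt_pow 2 x).neg.div_const 4).congr_deriv (by ring)
  exact (hexp.exp.const_mul (1 / √π)).congr_deriv (by unfold F'; ring)

theorem F_strictMono : StrictMono F :=
  strictMono_of_deriv_pos fun x => (hasDerivAt_F_s7 x).deriv ▸ F'_pos x

theorem Q_eq_of_lt {x y : ℝ} (h : y < x) :
    Q x y = !![F' x ^ 2 + x / 2 * F' x * (F x - F y), -(F' x * F' y);
      -(F' x * F' y), F' y ^ 2 - y / 2 * F' y * (F x - F y)] := by
  have hF : F y < F x := F_strictMono h
  have hne : (F x - F y) ^ 2 ≠ 0 := pow_ne_zero 2 (sub_pos.2 hF).ne'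
  unfold Q P
  rw [deriv_deriv_neg_log_sub_left hasDerivAt_F_s7 (hasDerivAt_F' x) hF,
    deriv_deriv_neg_log_sub_mixed hasDerivAt_F_s7 hF,
    deriv_deriv_neg_log_sub_right hasDerivAt_F_s7 (hasDerivAt_F' y) hF]
  ext i j
  fin_cases i <;> fin_cases j <;> simp [mul_div_cancel₀ _ hne] <;> ring

theorem exists_mem_Ioo_F'_sub_eq_mul {x y : ℝ} (h : y < x) :
    ∃ z ∈ Set.Ioo y x, F' x - F' y = -z / 2 * (F x - F y) := by
  have hF : Differentiable ℝ F := fun t => (hasDerivAt_F_s7 t).differentiableAt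
  have hF' : Differentiable ℝ F' := fun t => (hasDerivAt_F' t).differentiableAt
  obtain ⟨z, hz, hcauchy⟩ := exists_ratio_deriv_eq_ratio_slope F h
    hF.continuous.continuousOn hF.differentiableOn F'
    hF'.continuous.continuousOn hF'.differentiableOn
  rw [(hasDerivAt_F_s7 z).deriv, (hasDerivAt_F' z).deriv] at hcauchy
  refine ⟨z, hz, mul_right_cancel₀ (F'_pos z).ne' ?_⟩
  linear_combination hcauchy

theorem Q_decomposition (x y : ℝ) (h : y < x) :
    ∃ z ∈ Set.Ioo y x,
      (F' x - F' y) / (F x - F y) = -z / 2 ∧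
      Q x y =
        Matrix.diagonal
            ![F' x * (F x - F y) * (x - z) / 2, F' y * (F x - F y) * (z - y) / 2]
          + (F' x * F' y) • !![1, -1; -1, 1] := by
  obtain ⟨z, hz, hslope⟩ := exists_mem_Ioo_F'_sub_eq_mul h
  have hne : F x - F y ≠ 0 := (sub_pos.2 (F_strictMono h)).ne'
  refine ⟨z, hz, by rw [hslope, mul_div_cancel_right₀ _ hne], ?_⟩
  have hxx : F' x ^ 2 + x / 2 * F' x * (F x - F y)
      = F' x * (F x - F y) * (x - z) / 2 + F' x * F' y := by
    linear_combination F' x * hslope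
  have hyy : F' y ^ 2 - y / 2 * F' y * (F x - F y)
      = F' y * (F x - F y) * (z - y) / 2 + F' x * F' y := by
    linear_combination -F' y * hslope
  rw [Q_eq_of_lt h]
  ext i j
  fin_cases i <;> fin_cases j <;> simp [hxx, hyy]
end
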